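/- arXiv:q-alg/9606019 — 2 statements merged into one kernel-verified Lean document; each statement's English description precedes it below -/
import Mathlib

section
/- Let V be a 3-dimensional vector space with basis {u, v, w} over a field containing an invertible element q, and define a bilinear bracket [·,·]_q by: [u,u]_q=0, [u,v]_q=−q²Mu, [u,w]_q=(q+q⁻¹)⁻¹Mv, [v,u]_q=Mu, [v,v]_q=(1−q²)Mv, [v,w]_q=−q²Mw, [w,u]_q=−(q+q⁻¹)⁻¹Mv, [w,v]_q=Mw, [w,w]_q=0, for a fixed nonzero scalar M. Then the left adjoint operators ad(x)z = [x,z]_q satisfy: q²·ad(u)ad(v) − ad(v)ad(u) = −h·ad(u), (q³+q)(ad(u)ad(w) − ad(w)ad(u)) + (1−q²)·ad(v)² = h·ad(v), and −q²·ad(v)ad(w) + ad(w)ad(v) = h·ad(w), where h = M(q⁴ − q² + 1). -/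
/-!
Both sides of each relation are linear in `z`, so it suffices to check them on the spanning
vectors `u, v, w`, where they reduce to polynomial identities in `q`, `M` and the coefficient
`c = (q + q⁻¹)⁻¹` of the table. The first and third relations hold for every `c`; the second
uses `(q³ + q) c = q²`.
-/

theorem LinearMap.ext_on_triple {R M N : Type*} [Semiring R] [AddCommMonoid M] [Module R M]
    [AddCommMonoid N] [Module R N] {u v w : M} (hspan : Submodule.span R {u, v, w} = ⊤)
    {f g : M →ₗ[R] N} (hu : f u = g u) (hv : f v = g v) (hw : f w = g w) : f = g := by
  refine LinearMap.ext_on hspan fun x hx => ?_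
  rcases hx with rfl | rfl | rfl
  exacts [hu, hv, hw]

structure IsQAdjointBracket {K V : Type*} [Field K] [AddCommGroup V] [Module K V]
    (q c M : K) (u v w : V) (br : V →ₗ[K] V →ₗ[K] V) : Prop where
  uu : br u u = 0
  uv : br u v = (-(q ^ 2) * M) • u
  uw : br u w = (c * M) • v
  vu : br v u = M • u
  vv : br v v = ((1 - q ^ 2) * M) • v
  vw : br v w = (-(q ^ 2) * M) • w
  wu : br w u = (-c * M) • v
  wv : br w v = M • w
  ww : br w w = 0

namespace IsQAdjointBracket

variable {K V : Type*} [Field K] [AddCommGroup V] [Module K V] {q c M : K} {u v w : V}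
  {br : V →ₗ[K] V →ₗ[K] V}

theorem ad_u_ad_v (hbr : IsQAdjointBracket q c M u v w br)
    (hspan : Submodule.span K {u, v, w} = ⊤) :
    q ^ 2 • (br u ∘ₗ br v) - br v ∘ₗ br u = -(M * (q ^ 4 - q ^ 2 + 1)) • br u := by
  refine LinearMap.ext_on_triple hspan ?_ ?_ ?_ <;>
  · simp only [LinearMap.sub_apply, LinearMap.smul_apply, LinearMap.comp_apply, hbr.uu, hbr.uv,
      hbr.uw, hbr.vu, hbr.vv, hbr.vw, hbr.wu, hbr.wv, hbr.ww, map_smul, map_zero, smul_zero]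
    match_scalars <;> ring

theorem ad_v_ad_w (hbr : IsQAdjointBracket q c M u v w br)
    (hspan : Submodule.span K {u, v, w} = ⊤) :
    -q ^ 2 • (br v ∘ₗ br w) + br w ∘ₗ br v = (M * (q ^ 4 - q ^ 2 + 1)) • br w := by
  refine LinearMap.ext_on_triple hspan ?_ ?_ ?_ <;>
  · simp only [LinearMap.add_apply, LinearMap.smul_apply, LinearMap.comp_apply, hbr.uu, hbr.uv,
      hbr.uw, hbr.vu, hbr.vv, hbr.vw, hbr.wu, hbr.wv, hbr.ww, map_smul, map_zero, smul_zero]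
    match_scalars <;> ring

theorem ad_u_ad_w (hbr : IsQAdjointBracket q c M u v w br)
    (hspan : Submodule.span K {u, v, w} = ⊤) (hc : (q ^ 3 + q) * c = q ^ 2) :
    (q ^ 3 + q) • (br u ∘ₗ br w - br w ∘ₗ br u) + (1 - q ^ 2) • (br v ∘ₗ br v) =
      (M * (q ^ 4 - q ^ 2 + 1)) • br v := by
  refine LinearMap.ext_on_triple hspan ?_ ?_ ?_ <;>
  simp only [LinearMap.add_apply, LinearMap.sub_apply, LinearMap.smul_apply, LinearMap.comp_apply,
    hbr.uu, hbr.uv, hbr.uw, hbr.vu, hbr.vv, hbr.vw, hbr.wu, hbr.wv, hbr.ww, map_smul, map_zero,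
    smul_zero] <;>
  match_scalars
  · linear_combination q ^ 2 * M ^ 2 * hc
  · linear_combination (1 - q ^ 2) * M ^ 2 * hc
  · linear_combination -M ^ 2 * hc

end IsQAdjointBracket

theorem cube_add_mul_inv_add_inv {K : Type*} [Field K] {q : K} (hq : q + q⁻¹ ≠ 0) :
    (q ^ 3 + q) * (q + q⁻¹)⁻¹ = q ^ 2 := by
  have hfactor : q ^ 3 + q = q ^ 2 * (q + q⁻¹) := by
    rw [mul_add, sq, mul_self_mul_inv]
    ring
  rw [hfactor, mul_inv_cancel_right₀ hq]

theorem stmt_1_general {K : Type*} [Field K] (q : K) (hq2 : q + q⁻¹ ≠ 0)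
    (M : K)
    {V : Type*} [AddCommGroup V] [Module K V] (u v w : V)
    (hspan : Submodule.span K {u, v, w} = ⊤)
    (br : V →ₗ[K] V →ₗ[K] V)
    (h1 : br u u = 0) (h2 : br u v = (-(q ^ 2) * M) • u)
    (h3 : br u w = ((q + q⁻¹)⁻¹ * M) • v)
    (h4 : br v u = M • u) (h5 : br v v = ((1 - q ^ 2) * M) • v)
    (h6 : br v w = (-(q ^ 2) * M) • w)
    (h7 : br w u = (-(q + q⁻¹)⁻¹ * M) • v) (h8 : br w v = M • w)
    (h9 : br w w = 0)
    (h : K) (hh : h = M * (q ^ 4 - q ^ 2 + 1)) :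
    (∀ z : V, q ^ 2 • br u (br v z) - br v (br u z) = -h • br u z) ∧
    (∀ z : V, (q ^ 3 + q) • (br u (br w z) - br w (br u z)) +
        (1 - q ^ 2) • br v (br v z) = h • br v z) ∧
    (∀ z : V, -q ^ 2 • br v (br w z) + br w (br v z) = h • br w z) := by
  have hbr : IsQAdjointBracket q (q + q⁻¹)⁻¹ M u v w br := ⟨h1, h2, h3, h4, h5, h6, h7, h8, h9⟩
  subst hh
  exact ⟨fun z => LinearMap.congr_fun (hbr.ad_u_ad_v hspan) z,
    fun z => LinearMap.congr_fun (hbr.ad_u_ad_w hspan (cube_add_mul_inv_add_inv hq2)) z,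
    fun z => LinearMap.congr_fun (hbr.ad_v_ad_w hspan) z⟩

/-- The braided Jacobi identity for sl(2)_q: the left adjoint operators of the
braided bracket on the 3-dimensional q-adjoint module satisfy the same
quadratic-linear relations as the generators of the enveloping algebra,
with h = M(q⁴ − q² + 1). -/
theorem stmt_1 {K : Type*} [Field K] (q : K) (hq : q ≠ 0) (hq2 : q + q⁻¹ ≠ 0)
    (M : K) (hM : M ≠ 0)
    {V : Type*} [AddCommGroup V] [Module K V] (u v w : V)
    (hspan : Submodule.span K {u, v, w} = ⊤)
    (br : V →ₗ[K] V →ₗ[K] V)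
    (h1 : br u u = 0) (h2 : br u v = (-(q ^ 2) * M) • u)
    (h3 : br u w = ((q + q⁻¹)⁻¹ * M) • v)
    (h4 : br v u = M • u) (h5 : br v v = ((1 - q ^ 2) * M) • v)
    (h6 : br v w = (-(q ^ 2) * M) • w)
    (h7 : br w u = (-(q + q⁻¹)⁻¹ * M) • v) (h8 : br w v = M • w)
    (h9 : br w w = 0)
    (h : K) (hh : h = M * (q ^ 4 - q ^ 2 + 1)) :
    (∀ z : V, q ^ 2 • br u (br v z) - br v (br u z) = -h • br u z) ∧
    (∀ z : V, (q ^ 3 + q) • (br u (br w z) - br w (br u z)) +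
        (1 - q ^ 2) • br v (br v z) = h • br v z) ∧
    (∀ z : V, -q ^ 2 • br v (br w z) + br w (br v z) = h • br w z) :=
  stmt_1_general q hq2 M u v w hspan br h1 h2 h3 h4 h5 h6 h7 h8 h9 h hh
end

section
/- Let q be invertible with q+q⁻¹ ≠ 0, and consider the 2-dimensional space U with basis {a,b}. Define the map μ: V ⊗ U → U by μ(u⊗a)=0, μ(u⊗b)=a, μ(v⊗a)=q⁻¹a, μ(v⊗b)=−qb, μ(w⊗a)=q⁻¹b, μ(w⊗b)=0, where V = span{u,v,w} carries the U_q(sl(2))-action Hu=2u, Hv=0, Hw=−2w, Xu=0, Xv=−(q+q⁻¹)u, Xw=v, Yu=−v, Yv=(q+q⁻¹)w, Yw=0, and U carries Xa=0, Xb=a, Ha=a, Hb=−b, Ya=b, Yb=0, with V⊗U acted on via the coproduct Δ(X)=X⊗1+q^{−H}⊗X, Δ(Y)=1⊗Y+Y⊗q^{H}, Δ(H)=H⊗1+1⊗H. Then μ is equivariant for the generators: μ(X·(x⊗s)) = X·μ(x⊗s), μ(Y·(x⊗s)) = Y·μ(x⊗s), μ(H·(x⊗s)) = H·μ(x⊗s)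 for all x ∈ {u,v,w}, s ∈ {a,b}. -/
/-!
Both sides of each identity are linear maps out of `V ⊗ U`, so it suffices to compare them on
pure tensors `x ⊗ y` with arbitrary coordinates. There `μ` is an explicit bilinear expression in
the coordinates of `x` and `y`, and each identity becomes a polynomial identity in `q`, `q⁻¹` and
these coordinates, which holds once `q * q⁻¹ = 1`.
-/

open TensorProduct

theorem constr_tensorProduct_piBasisFun_tmul {R m n P : Type*} [CommSemiring R] [Fintype m]
    [Fintype n] [AddCommMonoid P] [Module R P] (f : m × n → P) (x : m → R) (y : n → R) :
    ((Pi.basisFun R m).tensorProduct (Pi.basisFun R n)).constr R f (x ⊗ₜ y) =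
      ∑ i, ∑ j, (x i * y j) • f (i, j) := by
  classical
  rw [Module.Basis.constr_apply_fintype, Fintype.sum_prod_type]
  simp only [Module.Basis.equivFun_apply, Module.Basis.tensorProduct_repr_tmul_apply,
    Pi.basisFun_repr, smul_eq_mul, mul_comm]

namespace Uqsl2

variable {K : Type*} [Field K] (q : K)

noncomputable def XV : Module.End K (Fin 3 → K) :=
  Matrix.toLin' !![0, -(q + q⁻¹), 0; 0, 0, 1; 0, 0, 0]

noncomputable def YV : Module.End K (Fin 3 → K) :=
  Matrix.toLin' !![0, 0, 0; -1, 0, 0; 0, q + q⁻¹, 0]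

noncomputable def HV : Module.End K (Fin 3 → K) :=
  Matrix.toLin' !![2, 0, 0; 0, 0, 0; 0, 0, -2]

noncomputable def KVinv : Module.End K (Fin 3 → K) :=
  Matrix.toLin' !![q⁻¹ ^ 2, 0, 0; 0, 1, 0; 0, 0, q ^ 2]

noncomputable def XU : Module.End K (Fin 2 → K) := Matrix.toLin' !![0, 1; 0, 0]

noncomputable def YU : Module.End K (Fin 2 → K) := Matrix.toLin' !![0, 0; 1, 0]

noncomputable def HU : Module.End K (Fin 2 → K) := Matrix.toLin' !![1, 0; 0, -1]

noncomputable def KU : Module.End K (Fin 2 → K) := Matrix.toLin' !![q, 0; 0, q⁻¹]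

noncomputable def mu : (Fin 3 → K) ⊗[K] (Fin 2 → K) →ₗ[K] (Fin 2 → K) :=
  ((Pi.basisFun K (Fin 3)).tensorProduct (Pi.basisFun K (Fin 2))).constr K
    fun p : Fin 3 × Fin 2 =>
      (![![(0 : Fin 2 → K), ![1, 0]],
         ![q⁻¹ • ![1, 0], (-q) • ![0, 1]],
         ![q⁻¹ • ![0, 1], (0 : Fin 2 → K)]] : Fin 3 → Fin 2 → Fin 2 → K) p.1 p.2

theorem mu_tmul (x : Fin 3 → K) (y : Fin 2 → K) :
    mu q (x ⊗ₜ y) = ![x 0 * y 1 + q⁻¹ * x 1 * y 0, q⁻¹ * x 2 * y 0 - q * x 1 * y 1] := by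
  rw [mu, constr_tensorProduct_piBasisFun_tmul]
  ext r
  fin_cases r <;> simp [Fin.sum_univ_succ] <;> ring

theorem mu_comp_coproduct_X (hq : q ≠ 0) :
    mu q ∘ₗ (map (XV q) LinearMap.id + map (KVinv q) XU) = XU ∘ₗ mu q := by
  refine TensorProduct.ext' fun x y => funext fun r => ?_
  fin_cases r <;>
    simp [mu_tmul, XV, KVinv, XU, Matrix.mulVec, dotProduct, Fin.sum_univ_succ] <;>
    field_simp <;> ring

theorem mu_comp_coproduct_Y (hq : q ≠ 0) :
    mu q ∘ₗ (map LinearMap.id YU + map (YV q) (KU q)) = YU ∘ₗ mu q := by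
  refine TensorProduct.ext' fun x y => funext fun r => ?_
  fin_cases r <;>
    simp [mu_tmul, YV, KU, YU, Matrix.mulVec, dotProduct, Fin.sum_univ_succ] <;>
    field_simp <;> ring

theorem mu_comp_coproduct_H :
    mu q ∘ₗ (map HV LinearMap.id + map LinearMap.id HU) = HU ∘ₗ mu q := by
  refine TensorProduct.ext' fun x y => funext fun r => ?_
  fin_cases r <;> simp [mu_tmul, HV, HU, Matrix.mulVec, dotProduct, Fin.sum_univ_succ] <;> ring

end Uqsl2

theorem stmt_10_general {K : Type*} [Field K] (q : K) (hq : q ≠ 0)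
    (XV YV HV KVinv : (Fin 3 → K) →ₗ[K] (Fin 3 → K))
    (hXV : XV = Matrix.toLin' !![0, -(q + q⁻¹), 0; 0, 0, 1; 0, 0, 0])
    (hYV : YV = Matrix.toLin' !![0, 0, 0; -1, 0, 0; 0, q + q⁻¹, 0])
    (hHV : HV = Matrix.toLin' !![2, 0, 0; 0, 0, 0; 0, 0, -2])
    (hKVinv : KVinv = Matrix.toLin' !![q⁻¹ ^ 2, 0, 0; 0, 1, 0; 0, 0, q ^ 2])
    (XU YU HU KU : (Fin 2 → K) →ₗ[K] (Fin 2 → K))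
    (hXU : XU = Matrix.toLin' !![0, 1; 0, 0])
    (hYU : YU = Matrix.toLin' !![0, 0; 1, 0])
    (hHU : HU = Matrix.toLin' !![1, 0; 0, -1])
    (hKU : KU = Matrix.toLin' !![q, 0; 0, q⁻¹])
    (μ : (Fin 3 → K) ⊗[K] (Fin 2 → K) →ₗ[K] (Fin 2 → K))
    (hμ : μ = ((Pi.basisFun K (Fin 3)).tensorProduct (Pi.basisFun K (Fin 2))).constr K
      (fun p : Fin 3 × Fin 2 =>
        (![![(0 : Fin 2 → K), ![1, 0]],
           ![q⁻¹ • ![1, 0], (-q) • ![0, 1]],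
           ![q⁻¹ • ![0, 1], (0 : Fin 2 → K)]] : Fin 3 → Fin 2 → Fin 2 → K) p.1 p.2)) :
    μ ∘ₗ (TensorProduct.map XV LinearMap.id + TensorProduct.map KVinv XU) = XU ∘ₗ μ ∧
    μ ∘ₗ (TensorProduct.map LinearMap.id YU + TensorProduct.map YV KU) = YU ∘ₗ μ ∧
    μ ∘ₗ (TensorProduct.map HV LinearMap.id + TensorProduct.map LinearMap.id HU) = HU ∘ₗ μ := by
  subst hXV hYV hHV hKVinv hXU hYU hHU hKU hμ
  exact ⟨Uqsl2.mu_comp_coproduct_X q hq, Uqsl2.mu_comp_coproduct_Y q hq,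
    Uqsl2.mu_comp_coproduct_H q⟩

/-- The explicit map μ : V ⊗ U → U (V the 3-dimensional q-adjoint module with
basis u,v,w; U the spin 1/2 module with basis a,b) given by μ(u⊗a)=0, μ(u⊗b)=a,
μ(v⊗a)=q⁻¹a, μ(v⊗b)=−qb, μ(w⊗a)=q⁻¹b, μ(w⊗b)=0 is a morphism of
U_q(sl(2))-modules, where V ⊗ U is acted on via the coproduct
Δ(X)=X⊗1+q^{−H}⊗X, Δ(Y)=1⊗Y+Y⊗q^{H}, Δ(H)=H⊗1+1⊗H. -/
theorem stmt_10 {K : Type*} [Field K] (q : K) (hq : q ≠ 0) (hq2 : q + q⁻¹ ≠ 0)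
    (XV YV HV KVinv : (Fin 3 → K) →ₗ[K] (Fin 3 → K))
    (hXV : XV = Matrix.toLin' !![0, -(q + q⁻¹), 0; 0, 0, 1; 0, 0, 0])
    (hYV : YV = Matrix.toLin' !![0, 0, 0; -1, 0, 0; 0, q + q⁻¹, 0])
    (hHV : HV = Matrix.toLin' !![2, 0, 0; 0, 0, 0; 0, 0, -2])
    (hKVinv : KVinv = Matrix.toLin' !![q⁻¹ ^ 2, 0, 0; 0, 1, 0; 0, 0, q ^ 2])
    (XU YU HU KU : (Fin 2 → K) →ₗ[K] (Fin 2 → K))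
    (hXU : XU = Matrix.toLin' !![0, 1; 0, 0])
    (hYU : YU = Matrix.toLin' !![0, 0; 1, 0])
    (hHU : HU = Matrix.toLin' !![1, 0; 0, -1])
    (hKU : KU = Matrix.toLin' !![q, 0; 0, q⁻¹])
    (μ : (Fin 3 → K) ⊗[K] (Fin 2 → K) →ₗ[K] (Fin 2 → K))
    (hμ : μ = ((Pi.basisFun K (Fin 3)).tensorProduct (Pi.basisFun K (Fin 2))).constr K
      (fun p : Fin 3 × Fin 2 =>
        (![![(0 : Fin 2 → K), ![1, 0]],
           ![q⁻¹ • ![1, 0], (-q) • ![0, 1]],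
           ![q⁻¹ • ![0, 1], (0 : Fin 2 → K)]] : Fin 3 → Fin 2 → Fin 2 → K) p.1 p.2)) :
    μ ∘ₗ (TensorProduct.map XV LinearMap.id + TensorProduct.map KVinv XU) = XU ∘ₗ μ ∧
    μ ∘ₗ (TensorProduct.map LinearMap.id YU + TensorProduct.map YV KU) = YU ∘ₗ μ ∧
    μ ∘ₗ (TensorProduct.map HV LinearMap.id + TensorProduct.map LinearMap.id HU) = HU ∘ₗ μ :=
  stmt_10_general q hq XV YV HV KVinv hXV hYV hHV hKVinv XU YU HU KU hXU hYU hHU hKU μ hμ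
end
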